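/- Let f be the logistic function and p(t|x) as in the three-category ordinal logistic model with fixed intercepts d₁ < d₀. Then for any α > 0, the quantity H_α = min_{t∈{−1,0,1}} inf_{|x|≤α} { (p'(t|x)/p(t|x))² − p''(t|x)/p(t|x) } is strictly positive, and G_α = max_t sup_{|x|≤α} |p'(t|x)|/p(t|x) is finite. -/

import Mathlib

private lemma stmt17_pos (d x : ℝ) : 0 < 1 + Real.exp (-(d+x)) := by positivity

private lemma stmt17_hE (d x : ℝ) :
    HasDerivAt (fun x => Real.exp (-(d+x))) (-Real.exp (-(d+x))) x := by
  have h1 : HasDerivAt (fun x : ℝ => -(d+x)) (-1) x := ((hasDerivAt_id x).const_add d).neg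
  simpa [Function.comp_def] using (Real.hasDerivAt_exp (-(d+x))).comp x h1

private lemma stmt17_hf1 (d x : ℝ) :
    HasDerivAt (fun x => 1/(1+Real.exp (-(d+x))))
      (Real.exp (-(d+x))/(1+Real.exp (-(d+x)))^2) x := by
  have hd : HasDerivAt (fun x => 1 + Real.exp (-(d+x))) (-Real.exp (-(d+x))) x :=
    (stmt17_hE d x).const_add 1
  have := hd.inv (ne_of_gt (stmt17_pos d x))
  simpa [one_div, neg_neg, Pi.inv_def] using this

private lemma stmt17_hg1 (d x : ℝ) :
    HasDerivAt (fun x => Real.exp (-(d+x))/(1+Real.exp (-(d+x)))^2)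
      (Real.exp (-(d+x)) * (Real.exp (-(d+x)) - 1)/(1+Real.exp (-(d+x)))^3) x := by
  have hd : HasDerivAt (fun x => 1 + Real.exp (-(d+x))) (-Real.exp (-(d+x))) x :=
    (stmt17_hE d x).const_add 1
  have hd2 := hd.pow 2
  have := (stmt17_hE d x).div hd2 (pow_ne_zero 2 (ne_of_gt (stmt17_pos d x)))
  refine (this.congr_of_eventuallyEq (Filter.Eventually.of_forall fun _ => rfl)).congr_deriv ?_
  have h0 := ne_of_gt (stmt17_pos d x)
  simp only [Pi.pow_apply]
  field_simp
  ring

private lemma stmt17_Q0 (a : ℝ) (ha : 0 < a) :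
    (-(a/(1+a)^2) / (1 - 1/(1+a)))^2 - (-(a*(a-1)/(1+a)^3)) / (1 - 1/(1+a))
      = a/(1+a)^2 := by
  have h1 : (0:ℝ) < 1 + a := by linarith
  have hp : 1 - 1/(1+a) = a/(1+a) := by field_simp; ring
  rw [hp]
  have ha' := ne_of_gt ha
  field_simp
  ring

private lemma stmt17_Q2 (a : ℝ) (ha : 0 < a) :
    ((a/(1+a)^2) / (1/(1+a)))^2 - (a*(a-1)/(1+a)^3) / (1/(1+a))
      = a/(1+a)^2 := by
  have h1 : (0:ℝ) < 1 + a := by linarith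
  field_simp
  ring

private lemma stmt17_Q1 (a b : ℝ) (ha : 0 < a) (hab : a < b) :
    ((a/(1+a)^2 - b/(1+b)^2) / (1/(1+a) - 1/(1+b)))^2
      - (a*(a-1)/(1+a)^3 - b*(b-1)/(1+b)^3) / (1/(1+a) - 1/(1+b))
      = ((a+b)*(1+a*b)+4*a*b)/((1+a)^2*(1+b)^2) := by
  have h1 : (0:ℝ) < 1 + a := by linarith
  have h2 : (0:ℝ) < 1 + b := by linarith
  have hp : 1/(1+a) - 1/(1+b) = (b-a)/((1+a)*(1+b)) := by field_simp; ring
  rw [hp]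
  have hba : b - a ≠ 0 := by linarith
  field_simp
  ring

private lemma stmt17_G0 (a : ℝ) (ha : 0 < a) :
    |-(a/(1+a)^2)| / (1 - 1/(1+a)) ≤ 1 := by
  have h1a : (0:ℝ) < 1+a := by linarith
  have hpx : 1 - 1/(1+a) = a/(1+a) := by field_simp; ring
  rw [abs_neg, abs_of_nonneg (by positivity), hpx, div_le_one (by positivity),
    div_le_div_iff₀ (by positivity) (by positivity)]
  nlinarith [mul_pos ha h1a, mul_pos (mul_pos ha h1a) ha]

private lemma stmt17_G2 (a : ℝ) (ha : 0 < a) :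
    |a/(1+a)^2| / (1/(1+a)) ≤ 1 := by
  have h1a : (0:ℝ) < 1+a := by linarith
  rw [abs_of_nonneg (by positivity), div_le_one (by positivity),
    div_le_div_iff₀ (by positivity) (by positivity)]
  nlinarith [mul_pos ha h1a]

private lemma stmt17_G1 (a b Ma Mb k : ℝ) (ha : 0 < a) (hab : a < b) (hk : 0 < k)
    (hba : k ≤ b - a) (haM : a ≤ Ma) (hbM : b ≤ Mb) :
    |a/(1+a)^2 - b/(1+b)^2| / (1/(1+a) - 1/(1+b)) ≤ (Ma+Mb)/(k/((1+Ma)*(1+Mb))) := by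
  have h1a : (0:ℝ) < 1+a := by linarith
  have h1b : (0:ℝ) < 1+b := by linarith
  have hb : 0 < b := ha.trans hab
  have hMa : 0 < Ma := lt_of_lt_of_le ha haM
  have hMb : 0 < Mb := lt_of_lt_of_le (ha.trans hab) hbM
  have hnum : |a/(1+a)^2 - b/(1+b)^2| ≤ Ma + Mb := by
    rw [abs_sub_le_iff]
    constructor
    · have h1 : a/(1+a)^2 ≤ a := by
        rw [div_le_iff₀ (by positivity)]
        nlinarith [mul_pos ha h1a, mul_pos (mul_pos ha h1a) ha]
      have h2 : (0:ℝ) ≤ b/(1+b)^2 := by positivity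
      linarith
    · have h1 : b/(1+b)^2 ≤ b := by
        rw [div_le_iff₀ (by positivity)]
        nlinarith [mul_pos hb h1b, mul_pos (mul_pos hb h1b) hb]
      have h2 : (0:ℝ) ≤ a/(1+a)^2 := by positivity
      linarith
  have hpx : 1/(1+a) - 1/(1+b) = (b-a)/((1+a)*(1+b)) := by field_simp; ring
  rw [hpx]
  refine div_le_div₀ (by positivity) hnum (by positivity) ?_
  refine div_le_div₀ (by linarith) hba (by positivity) ?_
  exact mul_le_mul (by linarith) (by linarith) (by linarith) (by linarith)

set_option maxHeartbeats 1000000 in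
/-- For the ordered logistic model, on any compact interval `|x| ≤ α` the quantity
`H_α = min_t inf_x {(p'(t|x)/p(t|x))² − p''(t|x)/p(t|x)}` is strictly positive and
`G_α = max_t sup_x |p'(t|x)|/p(t|x)` is finite. -/
theorem stmt_17 (d₀ d₁ α : ℝ) (h : d₁ < d₀) (hα : 0 < α)
    (f : ℝ → ℝ) (hf : f = fun x => 1 / (1 + Real.exp (-x)))
    (p : Fin 3 → ℝ → ℝ)
    (hp : p = ![fun x => 1 - f (d₀ + x),
                fun x => f (d₀ + x) - f (d₁ + x),
                fun x => f (d₁ + x)]) :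
    (∃ H > (0 : ℝ), ∀ (t : Fin 3) (x : ℝ), |x| ≤ α →
        H ≤ (deriv (p t) x / p t x) ^ 2 - deriv (deriv (p t)) x / p t x) ∧
    (∃ G : ℝ, ∀ (t : Fin 3) (x : ℝ), |x| ≤ α →
        |deriv (p t) x| / p t x ≤ G) := by
  have hp0 : p 0 = fun x => 1 - 1/(1+Real.exp (-(d₀+x))) := by
    rw [hp, hf]; simp only [Matrix.cons_val_zero]
  have hp1 : p 1 = fun x => 1/(1+Real.exp (-(d₀+x))) - 1/(1+Real.exp (-(d₁+x))) := by
    rw [hp, hf]; simp only [Matrix.cons_val_one, Matrix.head_cons, Matrix.cons_val_zero]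
  have hp2 : p 2 = fun x => 1/(1+Real.exp (-(d₁+x))) := by
    rw [hp, hf]; simp only [Matrix.cons_val_two, Matrix.tail_cons, Matrix.head_cons]
  -- first derivatives
  have D0 : deriv (p 0) = fun x => -(Real.exp (-(d₀+x))/(1+Real.exp (-(d₀+x)))^2) := by
    rw [hp0]; exact funext fun x => (HasDerivAt.const_sub 1 (stmt17_hf1 d₀ x)).deriv
  have D1 : deriv (p 1) = fun x =>
      Real.exp (-(d₀+x))/(1+Real.exp (-(d₀+x)))^2
        - Real.exp (-(d₁+x))/(1+Real.exp (-(d₁+x)))^2 := by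
    rw [hp1]; exact funext fun x => ((stmt17_hf1 d₀ x).sub (stmt17_hf1 d₁ x)).deriv
  have D2 : deriv (p 2) = fun x => Real.exp (-(d₁+x))/(1+Real.exp (-(d₁+x)))^2 := by
    rw [hp2]; exact funext fun x => (stmt17_hf1 d₁ x).deriv
  -- second derivatives
  have DD0 : deriv (deriv (p 0)) = fun x =>
      -(Real.exp (-(d₀+x)) * (Real.exp (-(d₀+x)) - 1)/(1+Real.exp (-(d₀+x)))^3) := by
    rw [D0]; exact funext fun x => ((stmt17_hg1 d₀ x).neg).deriv
  have DD1 : deriv (deriv (p 1)) = fun x =>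
      Real.exp (-(d₀+x)) * (Real.exp (-(d₀+x)) - 1)/(1+Real.exp (-(d₀+x)))^3
        - Real.exp (-(d₁+x)) * (Real.exp (-(d₁+x)) - 1)/(1+Real.exp (-(d₁+x)))^3 := by
    rw [D1]; exact funext fun x => ((stmt17_hg1 d₀ x).sub (stmt17_hg1 d₁ x)).deriv
  have DD2 : deriv (deriv (p 2)) = fun x =>
      Real.exp (-(d₁+x)) * (Real.exp (-(d₁+x)) - 1)/(1+Real.exp (-(d₁+x)))^3 := by
    rw [D2]; exact funext fun x => (stmt17_hg1 d₁ x).deriv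
  -- bounds on the exponentials
  set m₀ : ℝ := Real.exp (-d₀-α) with hm₀
  set M₀ : ℝ := Real.exp (-d₀+α) with hM₀
  set m₁ : ℝ := Real.exp (-d₁-α) with hm₁
  set M₁ : ℝ := Real.exp (-d₁+α) with hM₁
  have hm₀p : 0 < m₀ := Real.exp_pos _
  have hM₀p : 0 < M₀ := Real.exp_pos _
  have hm₁p : 0 < m₁ := Real.exp_pos _
  have hM₁p : 0 < M₁ := Real.exp_pos _
  have hK : (0:ℝ) < Real.exp (-α) * (Real.exp (-d₁) - Real.exp (-d₀)) := by
    have : Real.exp (-d₀) < Real.exp (-d₁) := Real.exp_lt_exp.mpr (by linarith)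
    have h2 := Real.exp_pos (-α)
    nlinarith
  constructor
  · refine ⟨min (m₀/(1+M₀)^2) (min (m₁/(1+M₁)^2)
      ((m₀+m₁)/((1+M₀)^2*(1+M₁)^2))), ?_, ?_⟩
    · positivity
    · intro t x hx
      obtain ⟨hx1, hx2⟩ := abs_le.mp hx
      set a : ℝ := Real.exp (-(d₀+x)) with hadef
      set b : ℝ := Real.exp (-(d₁+x)) with hbdef
      have ha : 0 < a := Real.exp_pos _
      have hb : 0 < b := Real.exp_pos _
      have hab : a < b := Real.exp_lt_exp.mpr (by linarith)
      have ham : m₀ ≤ a := Real.exp_le_exp.mpr (by linarith)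
      have haM : a ≤ M₀ := Real.exp_le_exp.mpr (by linarith)
      have hbm : m₁ ≤ b := Real.exp_le_exp.mpr (by linarith)
      have hbM : b ≤ M₁ := Real.exp_le_exp.mpr (by linarith)
      have key0 : m₀/(1+M₀)^2 ≤
          (deriv (p 0) x / p 0 x) ^ 2 - deriv (deriv (p 0)) x / p 0 x := by
        rw [DD0, D0, hp0]
        simp only
        rw [stmt17_Q0 a ha]
        exact div_le_div₀ ha.le ham (by positivity) (pow_le_pow_left₀ (by linarith) (by linarith) 2)
      have key2 : m₁/(1+M₁)^2 ≤
          (deriv (p 2) x / p 2 x) ^ 2 - deriv (deriv (p 2)) x / p 2 x := by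
        rw [DD2, D2, hp2]
        simp only
        rw [stmt17_Q2 b hb]
        exact div_le_div₀ hb.le hbm (by positivity) (pow_le_pow_left₀ (by linarith) (by linarith) 2)
      have key1 : (m₀+m₁)/((1+M₀)^2*(1+M₁)^2) ≤
          (deriv (p 1) x / p 1 x) ^ 2 - deriv (deriv (p 1)) x / p 1 x := by
        rw [DD1, D1, hp1]
        simp only
        rw [stmt17_Q1 a b ha hab]
        have hnum1 : m₀ + m₁ ≤ (a+b)*(1+a*b)+4*a*b := by
          have t1 : (0:ℝ) ≤ (a+b)*(a*b) + 4*(a*b) := by positivity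
          have t2 : (a+b)*(1+a*b)+4*a*b = (a+b) + ((a+b)*(a*b) + 4*(a*b)) := by ring
          linarith
        have hden1 : (1+a)^2*(1+b)^2 ≤ (1+M₀)^2*(1+M₁)^2 := by
          have h1 : (1+a)^2 ≤ (1+M₀)^2 := pow_le_pow_left₀ (by linarith) (by linarith) 2
          have h2 : (1+b)^2 ≤ (1+M₁)^2 := pow_le_pow_left₀ (by linarith) (by linarith) 2
          exact mul_le_mul h1 h2 (by positivity) (by positivity)
        exact div_le_div₀ (by positivity) hnum1 (by positivity) hden1
      fin_cases t
      · exact le_trans (min_le_left _ _) key0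
      · exact le_trans (le_trans (min_le_right _ _)
          (le_trans (min_le_right _ _) (le_refl _))) key1
      · exact le_trans (le_trans (min_le_right _ _) (min_le_left _ _)) key2
  · refine ⟨max 1 ((M₀+M₁) /
      ((Real.exp (-α) * (Real.exp (-d₁) - Real.exp (-d₀)))/((1+M₀)*(1+M₁)))), ?_⟩
    intro t x hx
    obtain ⟨hx1, hx2⟩ := abs_le.mp hx
    have ha : 0 < Real.exp (-(d₀+x)) := Real.exp_pos _
    have hb : 0 < Real.exp (-(d₁+x)) := Real.exp_pos _
    have hab : Real.exp (-(d₀+x)) < Real.exp (-(d₁+x)) := Real.exp_lt_exp.mpr (by linarith)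
    have haM : Real.exp (-(d₀+x)) ≤ M₀ := Real.exp_le_exp.mpr (by linarith)
    have hbM : Real.exp (-(d₁+x)) ≤ M₁ := Real.exp_le_exp.mpr (by linarith)
    have hba : Real.exp (-α) * (Real.exp (-d₁) - Real.exp (-d₀)) ≤
        Real.exp (-(d₁+x)) - Real.exp (-(d₀+x)) := by
      have hbx : Real.exp (-(d₁+x)) = Real.exp (-x) * Real.exp (-d₁) := by
        rw [← Real.exp_add]; ring_nf
      have hax : Real.exp (-(d₀+x)) = Real.exp (-x) * Real.exp (-d₀) := by
        rw [← Real.exp_add]; ring_nf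
      rw [hbx, hax]
      have hex : Real.exp (-α) ≤ Real.exp (-x) := Real.exp_le_exp.mpr (by linarith)
      have hdd : Real.exp (-d₀) < Real.exp (-d₁) := Real.exp_lt_exp.mpr (by linarith)
      nlinarith
    have key0 : |deriv (p 0) x| / p 0 x ≤ 1 := by
      rw [D0, hp0]
      simp only
      exact stmt17_G0 _ ha
    have key2 : |deriv (p 2) x| / p 2 x ≤ 1 := by
      rw [D2, hp2]
      simp only
      exact stmt17_G2 _ hb
    have key1 : |deriv (p 1) x| / p 1 x ≤
        (M₀+M₁) / ((Real.exp (-α) * (Real.exp (-d₁) - Real.exp (-d₀)))/((1+M₀)*(1+M₁))) := by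
      rw [D1, hp1]
      simp only
      exact stmt17_G1 _ _ _ _ _ ha hab hK hba haM hbM
    fin_cases t
    · exact le_trans key0 (le_max_left _ _)
    · exact le_trans key1 (le_max_right _ _)
    · exact le_trans key2 (le_max_left _ _)
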